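/- The Bäcklund transformation s₅ of the D₆⁽¹⁾ system, (q,p) ↦ (q + α₅/p, p) with parameter change (α₄,α₅) ↦ (α₄+α₅, −α₅) (all other variables and parameters unchanged), maps solutions of the D₆⁽¹⁾ system to solutions with the new parameters, wherever p ≠ 0. -/

import Mathlib

/-- The coupled Painlevé III system of type `D₆⁽¹⁾` at time `t`. -/
def SolvesD6 (a0 a1 a2 a3 a4 a5 a6 : ℝ) (x y z w q p : ℝ → ℝ) (t : ℝ) : Prop :=
  HasDerivAt x ((2*(x t)^2*(y t) + 2*(z t)^2*(w t) - (x t)^2 - (a0+a1)*(x t)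
      + 2*a3*(z t) - 2*(p t) + t)/t) t ∧
  HasDerivAt y ((-2*(x t)*(y t)^2 + 2*(x t)*(y t) - (a0+a1)*(y t) + a1)/t) t ∧
  HasDerivAt z ((2*(z t)^2*(w t) + 2*(y t)*(z t)^2 - (z t)^2
      - (2*a4-1+a5+a6)*(z t) - 2*(p t) + t)/t) t ∧
  HasDerivAt w ((-2*(z t)*(w t)^2 - 4*(y t)*(z t)*(w t) + 2*(z t)*(w t)
      - 2*a3*(y t) + (2*a4-1+a5+a6)*(w t) + a3)/t) t ∧
  HasDerivAt q ((2*(q t)^2*(p t) - t*(q t)^2 - 2*(y t) - 2*(w t)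
      + (a5+a6-1)*(q t) + 1)/t) t ∧
  HasDerivAt p ((-2*(q t)*(p t)^2 + 2*t*(q t)*(p t) - (a5+a6-1)*(p t) + t*a5)/t) t

/-- The Bäcklund transformation `s₅` of the `D₆⁽¹⁾` system, `(q,p) ↦ (q + α₅/p, p)`
with `(α₄,α₅) ↦ (α₄+α₅, −α₅)`, maps solutions to solutions wherever `p ≠ 0`. -/
theorem stmt11 (a0 a1 a2 a3 a4 a5 a6 : ℝ)
    (hrel : a0 + a1 + 2*a2 + 2*a3 + 2*a4 + a5 + a6 = 1)
    (x y z w q p : ℝ → ℝ)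
    (hsol : ∀ t : ℝ, t ≠ 0 → SolvesD6 a0 a1 a2 a3 a4 a5 a6 x y z w q p t)
    (hp : ∀ t : ℝ, t ≠ 0 → p t ≠ 0) :
    ∀ t : ℝ, t ≠ 0 →
      SolvesD6 a0 a1 a2 a3 (a4+a5) (-a5) a6
        x y z w (fun s => q s + a5/(p s)) p t := by
  intro t ht
  obtain ⟨hx, hy, hz, hw, hq, hp'⟩ := hsol t ht
  have hpne := hp t ht
  have hcoef : 2*(a4+a5)-1+(-a5)+a6 = 2*a4-1+a5+a6 := by ring
  refine ⟨hx, hy, ?_, ?_, ?_, ?_⟩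
  · rw [hcoef]; exact hz
  · rw [hcoef]; exact hw
  · have hdiv := (hasDerivAt_const t a5).div hp' hpne
    have h : HasDerivAt (fun s => q s + a5 / p s) _ t := hq.add hdiv
    convert h using 1
    field_simp
    ring
  · convert hp' using 1
    field_simp
    ring
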